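/- arXiv:2303.11982 — 2 statements merged into one kernel-verified Lean document; each statement's English description precedes it below -/
import Mathlib

section
/- Consider the zero dynamics attack generator z[k+1] = (A - BCA/(CB)) z[k], a[k] = -(CA/(CB)) z[k], with z[0] ∈ ker C. If the attacked system evolves as x_a[k+1] = A x_a[k] + B(u[k] + a[k]) with x_a[0] = x[0] + z[0], and the nominal system as x[k+1] = A x[k] + B u[k], then x_a[k] - x[k] = z[k] for all k, and hence C x_a[k] = C x[k] for all k (the attack is perfectly stealthy in the output). -/
/-!
The gap `xa - x` between the attacked and the nominal trajectory obeys the nominal dynamics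
driven by the attack alone, and the zero-dynamics recursion for `z` is exactly that recursion
once the attack `a k` is substituted; so `xa - x = z` by induction. The feedback term
`-(CB)⁻¹ B (CA)` is chosen so that `C` annihilates every output of the zero-dynamics matrix,
hence `z k ∈ ker C` for all `k` (for `k = 0` by assumption), and the outputs coincide.
-/

open Matrix

section ZeroDynamics

variable {ι K : Type*} [Fintype ι] [Field K]

def zeroDynamicsMatrix (A : Matrix ι ι K) (B C : ι → K) : Matrix ι ι K :=
  A - (C ⬝ᵥ B)⁻¹ • vecMulVec B (C ᵥ* A)

theorem zeroDynamicsMatrix_mulVec (A : Matrix ι ι K) (B C v : ι → K) :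
    zeroDynamicsMatrix A B C *ᵥ v = A *ᵥ v - ((C ⬝ᵥ B)⁻¹ * (C ᵥ* A ⬝ᵥ v)) • B := by
  rw [zeroDynamicsMatrix, sub_mulVec, smul_mulVec, vecMulVec_mulVec, op_smul_eq_smul,
    smul_smul]

theorem dotProduct_zeroDynamicsMatrix_mulVec (A : Matrix ι ι K) {B C : ι → K}
    (hCB : C ⬝ᵥ B ≠ 0) (v : ι → K) : C ⬝ᵥ (zeroDynamicsMatrix A B C *ᵥ v) = 0 := by
  rw [zeroDynamicsMatrix_mulVec, dotProduct_sub, dotProduct_smul, dotProduct_mulVec,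
    smul_eq_mul, mul_right_comm, inv_mul_cancel₀ hCB, one_mul, sub_self]

end ZeroDynamics

theorem sub_eq_of_input_perturbation {ι R : Type*} [Fintype ι] [Ring R]
    (A : Matrix ι ι R) (B : ι → R) (u a : ℕ → R) (x xa z : ℕ → ι → R)
    (h0 : xa 0 - x 0 = z 0)
    (hx : ∀ k, x (k + 1) = A *ᵥ x k + u k • B)
    (hxa : ∀ k, xa (k + 1) = A *ᵥ xa k + (u k + a k) • B)
    (hz : ∀ k, z (k + 1) = A *ᵥ z k + a k • B) (k : ℕ) :
    xa k - x k = z k := by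
  induction k with
  | zero => exact h0
  | succ k ih =>
    rw [hxa, hx, hz, ← ih, mulVec_sub, add_smul]
    abel

theorem stmt_3 (n : ℕ) (A : Matrix (Fin n) (Fin n) ℝ) (B C : Fin n → ℝ)
    (hCB : dotProduct C B ≠ 0)
    (u a : ℕ → ℝ) (z x xa : ℕ → Fin n → ℝ)
    (hz0 : dotProduct C (z 0) = 0)
    (hzrec : ∀ k, z (k + 1) =
      Matrix.mulVec
        (A - (dotProduct C B)⁻¹ • Matrix.vecMulVec B (Matrix.vecMul C A)) (z k))
    (ha : ∀ k, a k = -(dotProduct C B)⁻¹ *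
      dotProduct (Matrix.vecMul C A) (z k))
    (hx0 : xa 0 = x 0 + z 0)
    (hxrec : ∀ k, x (k + 1) = Matrix.mulVec A (x k) + u k • B)
    (hxarec : ∀ k, xa (k + 1) = Matrix.mulVec A (xa k) + (u k + a k) • B) :
    (∀ k, xa k - x k = z k) ∧
    (∀ k, dotProduct C (xa k) = dotProduct C (x k)) := by
  have hz : ∀ k, z (k + 1) = A *ᵥ z k + a k • B := fun k => by
    rw [(hzrec k).trans (zeroDynamicsMatrix_mulVec A B C (z k)), ha, neg_mul, neg_smul,
      sub_eq_add_neg]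
  have hdiff : ∀ k, xa k - x k = z k :=
    sub_eq_of_input_perturbation A B u a x xa z (by rw [hx0, add_sub_cancel_left])
      hxrec hxarec hz
  have hCz : ∀ k, C ⬝ᵥ z k = 0
    | 0 => hz0
    | k + 1 => (hzrec k).symm ▸ dotProduct_zeroDynamicsMatrix_mulVec A hCB (z k)
  refine ⟨hdiff, fun k => ?_⟩
  rw [← sub_eq_zero, ← dotProduct_sub, hdiff, hCz]
end

section
/- Let A ∈ ℝ^{n×n}, B ∈ ℝ^n, C ∈ ℝ^{1×n} with CB ≠ 0. Consider the dynamic quantizer ξ[k+1] = A ξ[k] + B v[k] - B u[k], v[k] = q(-(CA/(CB)) ξ[k] + u[k]), with ξ[0] = 0, where |q(μ) - μ| ≤ d/2 for all μ. Then the outputs of x'[k+1] = A x'[k] + B v[k] and x[k+1] = A x[k] + B u[k] (both starting from the same initial state) satisfy |C x'[k] - C x[k]| ≤ (1/2)|CB| d for all k. -/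
/-!
The error `ξ` of the dynamic quantizer is exactly the state difference `x' - x`, since both obey
the same linear recursion from `0`. The quantizer input `μ` is chosen so that the output of the next
error state, `C (A ξ + (q μ - u) B)`, cancels everything except `(q μ - μ) · CB`; the quantization
error bound then gives `|C x' - C x| ≤ |CB| d / 2` at every step after the first, and the first
difference is zero.
-/

open Matrix

section

variable {ι R : Type*} [Fintype ι]

theorem sub_eq_of_mulVec_add_smul_recursions [CommRing R] (A : Matrix ι ι R) (B : ι → R)
    (u v : ℕ → R) (ξ x x' : ℕ → ι → R) (hξ0 : ξ 0 = x' 0 - x 0)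
    (hξ : ∀ k, ξ (k + 1) = A *ᵥ ξ k + (v k - u k) • B)
    (hx : ∀ k, x (k + 1) = A *ᵥ x k + u k • B)
    (hx' : ∀ k, x' (k + 1) = A *ᵥ x' k + v k • B) :
    ∀ k, x' k - x k = ξ k
  | 0 => hξ0.symm
  | k + 1 => by
    rw [hx', hx, hξ, ← sub_eq_of_mulVec_add_smul_recursions A B u v ξ x x' hξ0 hξ hx hx' k,
      mulVec_sub, sub_smul]
    abel

theorem dotProduct_mulVec_add_sub_smul_eq [Field R] (A : Matrix ι ι R) (B C ξ : ι → R)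
    (hCB : C ⬝ᵥ B ≠ 0) (w u : R) :
    C ⬝ᵥ (A *ᵥ ξ + (w - u) • B) = (w - (-(C ⬝ᵥ B)⁻¹ * (vecMul C A ⬝ᵥ ξ) + u)) * (C ⬝ᵥ B) := by
  rw [dotProduct_add, dotProduct_smul, dotProduct_mulVec, smul_eq_mul]
  field_simp
  ring

end

theorem stmt_6 (n : ℕ) (A : Matrix (Fin n) (Fin n) ℝ) (B C : Fin n → ℝ)
    (hCB : dotProduct C B ≠ 0)
    (d : ℝ) (q : ℝ → ℝ) (hq : ∀ μ, |q μ - μ| ≤ d / 2)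
    (u v : ℕ → ℝ) (ξ x x' : ℕ → Fin n → ℝ)
    (hξ0 : ξ 0 = 0)
    (hξ : ∀ k, ξ (k + 1) = Matrix.mulVec A (ξ k) + (v k - u k) • B)
    (hv : ∀ k, v k = q (-(dotProduct C B)⁻¹ *
      dotProduct (Matrix.vecMul C A) (ξ k) + u k))
    (hx0 : x' 0 = x 0)
    (hx : ∀ k, x (k + 1) = Matrix.mulVec A (x k) + u k • B)
    (hx' : ∀ k, x' (k + 1) = Matrix.mulVec A (x' k) + v k • B) :
    ∀ k, |dotProduct C (x' k) - dotProduct C (x k)| ≤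
      1 / 2 * |dotProduct C B| * d := by
  have hdiff := sub_eq_of_mulVec_add_smul_recursions A B u v ξ x x' (by rw [hξ0, hx0, sub_self])
    hξ hx hx'
  have hd : 0 ≤ d := by linarith [hq 0, abs_nonneg (q 0 - 0)]
  intro k
  rw [← dotProduct_sub, hdiff]
  cases k with
  | zero => simpa [hξ0] using by positivity
  | succ k =>
    rw [hξ, hv, dotProduct_mulVec_add_sub_smul_eq A B C (ξ k) hCB, abs_mul]
    calc _ ≤ d / 2 * |C ⬝ᵥ B| := mul_le_mul_of_nonneg_right (hq _) (abs_nonneg _)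
      _ = 1 / 2 * |C ⬝ᵥ B| * d := by ring
end
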